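/- Conversely, in the Set-Cover reduction graph, if there exists a routing tree of lifetime 1 in the unaggregated model then there exists a set cover of size at most p: the energy-2 row-3 nodes can each carry at most one set-node's subtree, forcing at least p set-nodes to route through the p+n+1 node, and since that node's subtree size is at most p+n+1 those p set-nodes' subtrees together contain all n element-nodes, whose parent set-nodes form a cover. -/
import Mathlib


open scoped Classical

/-- A routing tree on a communication graph `G` rooted at `root`: each non-root
node has a parent it is adjacent to, and iterating the parent map reaches the root. -/
structure RoutingTree {V : Type*} [Fintype V] (G : SimpleGraph V) (root : V) where
  parent : V → V
  parent_root : parent root = root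
  adj_parent : ∀ i, i ≠ root → G.Adj i (parent i)
  reaches_root : ∀ i, ∃ k, parent^[k] i = root

namespace RoutingTree

variable {V : Type*} [Fintype V] {G : SimpleGraph V} {root : V}

/-- Number of vertices in the subtree rooted at `i`. -/
noncomputable def subtreeSize (T : RoutingTree G root) (i : V) : ℕ :=
  {j : V | ∃ k, T.parent^[k] j = i}.ncard

/-- Number of children of `i` in the routing tree. -/
noncomputable def numChildren (T : RoutingTree G root) (i : V) : ℕ :=
  {j : V | j ≠ root ∧ T.parent j = i}.ncard

end RoutingTree

/-- Vertex type of the Set-Cover reduction graph: the root, two second-row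
nodes (indexed by `Bool`), `k` third-row nodes, `k` set-nodes and `n`
element-nodes. -/
abbrev RV (k n : ℕ) := Unit ⊕ (Bool ⊕ (Fin k ⊕ (Fin k ⊕ Fin n)))

/-- Adjacency of the reduction graph: the root is adjacent to both row-2 nodes;
the row-2 node `false` (energy `2k−p+1`) is adjacent to all row-3 nodes; row-3
node `i` is adjacent to set-node `i`; the row-2 node `true` (energy `p+n+1`) is
adjacent to all set-nodes; and element `j` is adjacent to set-node `i` iff
`j ∈ S i`. -/
def redAdj {k n : ℕ} (S : Fin k → Finset (Fin n)) : RV k n → RV k n → Prop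
  | Sum.inl _, Sum.inr (Sum.inl _) => True
  | Sum.inr (Sum.inl b), Sum.inr (Sum.inr (Sum.inl _)) => b = false
  | Sum.inr (Sum.inr (Sum.inl i)), Sum.inr (Sum.inr (Sum.inr (Sum.inl i'))) => i = i'
  | Sum.inr (Sum.inl b), Sum.inr (Sum.inr (Sum.inr (Sum.inl _))) => b = true
  | Sum.inr (Sum.inr (Sum.inr (Sum.inl i))), Sum.inr (Sum.inr (Sum.inr (Sum.inr j))) => j ∈ S i
  | _, _ => False

/-- The Set-Cover reduction graph. -/
def redGraph {k n : ℕ} (S : Fin k → Finset (Fin n)) : SimpleGraph (RV k n) :=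
  SimpleGraph.fromRel (redAdj S)

/-- Node energies in the reduction graph. -/
def energy (k n p : ℕ) (S : Fin k → Finset (Fin n)) : RV k n → ℕ
  | Sum.inl _ => 0
  | Sum.inr (Sum.inl false) => 2 * k - p + 1
  | Sum.inr (Sum.inl true) => p + n + 1
  | Sum.inr (Sum.inr (Sum.inl _)) => 2
  | Sum.inr (Sum.inr (Sum.inr (Sum.inl i))) => (S i).card + 1
  | Sum.inr (Sum.inr (Sum.inr (Sum.inr _))) => 1

section Aux

abbrev eltV {k n : ℕ} (j : Fin n) : RV k n := Sum.inr (Sum.inr (Sum.inr (Sum.inr j)))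
abbrev setV {k n : ℕ} (i : Fin k) : RV k n := Sum.inr (Sum.inr (Sum.inr (Sum.inl i)))
abbrev rowV {k n : ℕ} (i : Fin k) : RV k n := Sum.inr (Sum.inr (Sum.inl i))
abbrev r2V {k n : ℕ} (b : Bool) : RV k n := Sum.inr (Sum.inl b)

lemma card_le_ncard {V : Type*} [Finite V] (A : Finset V) (s : Set V)
    (h : ∀ a ∈ A, a ∈ s) : A.card ≤ s.ncard := by
  rw [← Set.ncard_coe_finset]
  exact Set.ncard_le_ncard h (Set.toFinite s)

lemma subtreeSize_def {V : Type*} [Fintype V] {G : SimpleGraph V} {root : V}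
    (T : RoutingTree G root) (i : V) :
    T.subtreeSize i = {j : V | ∃ m, T.parent^[m] j = i}.ncard := rfl

end Aux

/-- Conversely, if the reduction graph admits a routing tree of lifetime `1` in
the unaggregated model (every non-root node's subtree size is at most its
energy), then there is a set cover of size at most `p`. -/
theorem stmt18 (n k p : ℕ) (S : Fin k → Finset (Fin n)) (hp : p ≤ k)
    (hT : ∃ T : RoutingTree (redGraph S) (Sum.inl () : RV k n),
      ∀ v, v ≠ (Sum.inl () : RV k n) → T.subtreeSize v ≤ energy k n p S v) :
    ∃ P : Finset (Fin k), P.card ≤ p ∧ ∀ j : Fin n, ∃ i ∈ P, j ∈ S i := by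
  obtain ⟨T, hT⟩ := hT
  -- Step 1: every element node's parent is a set node containing it.
  have hpar : ∀ j : Fin n, ∃ i : Fin k, j ∈ S i ∧ T.parent (eltV j) = setV i := by
    intro j
    have hne : (eltV j : RV k n) ≠ Sum.inl () := by simp
    have hadj := T.adj_parent _ hne
    rcases hx : T.parent (eltV j) with u | (b | (i | (i | j')))
    · rw [hx] at hadj; simp [redGraph, SimpleGraph.fromRel_adj, redAdj] at hadj
    · rw [hx] at hadj; simp [redGraph, SimpleGraph.fromRel_adj, redAdj] at hadj
    · rw [hx] at hadj; simp [redGraph, SimpleGraph.fromRel_adj, redAdj] at hadj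
    · rw [hx] at hadj
      simp only [redGraph, SimpleGraph.fromRel_adj, redAdj] at hadj
      exact ⟨i, by tauto, rfl⟩
    · rw [hx] at hadj; simp [redGraph, SimpleGraph.fromRel_adj, redAdj] at hadj
  choose f hf hpf using hpar
  -- Step 2: each set node that is the parent of an element routes through r2V true.
  have hsetpar : ∀ j : Fin n, T.parent (setV (f j)) = r2V true := by
    intro j
    have hne : (setV (f j) : RV k n) ≠ Sum.inl () := by simp
    have hadj := T.adj_parent _ hne
    rcases hx : T.parent (setV (f j)) with u | (b | (i | (i' | j')))
    · rw [hx] at hadj; simp [redGraph, SimpleGraph.fromRel_adj, redAdj] at hadj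
    · rw [hx] at hadj
      simp [redGraph, SimpleGraph.fromRel_adj, redAdj] at hadj
      simp [hadj]
    · -- parent is a row-3 node: contradiction with its energy 2
      rw [hx] at hadj
      simp [redGraph, SimpleGraph.fromRel_adj, redAdj] at hadj
      subst hadj
      exfalso
      have hE := hT (rowV (f j)) (by simp)
      have h3 : ({rowV (f j), setV (f j), eltV j} : Finset (RV k n)).card ≤
          T.subtreeSize (rowV (f j)) := by
        rw [subtreeSize_def]
        apply card_le_ncard
        intro a ha
        simp only [Finset.mem_insert, Finset.mem_singleton] at ha
        rcases ha with rfl | rfl | rfl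
        · exact ⟨0, rfl⟩
        · exact ⟨1, by simpa using hx⟩
        · refine ⟨2, ?_⟩
          show T.parent (T.parent (eltV j)) = rowV (f j)
          rw [hpf j, hx]
      have hcard : ({rowV (f j), setV (f j), eltV j} : Finset (RV k n)).card = 3 := by
        rw [Finset.card_insert_of_notMem (by simp), Finset.card_insert_of_notMem (by simp),
          Finset.card_singleton]
      simp only [energy] at hE
      omega
    · rw [hx] at hadj; simp [redGraph, SimpleGraph.fromRel_adj, redAdj] at hadj
    · -- parent is an element node: contradiction with its energy 1
      exfalso
      have hE := hT (eltV j') (by simp)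
      have h2 : ({eltV j', setV (f j)} : Finset (RV k n)).card ≤ T.subtreeSize (eltV j') := by
        rw [subtreeSize_def]
        apply card_le_ncard
        intro a ha
        simp only [Finset.mem_insert, Finset.mem_singleton] at ha
        rcases ha with rfl | rfl
        · exact ⟨0, rfl⟩
        · exact ⟨1, by simpa using hx⟩
      have hcard : ({eltV j', setV (f j)} : Finset (RV k n)).card = 2 := by
        rw [Finset.card_insert_of_notMem (by simp), Finset.card_singleton]
      simp only [energy] at hE
      omega
  -- Step 3: the cover
  refine ⟨Finset.univ.image f, ?_, fun j => ⟨f j, by simp, hf j⟩⟩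
  set P : Finset (Fin k) := Finset.univ.image f with hP
  have hE := hT (r2V true) (by simp)
  set A : Finset (RV k n) :=
    insert (r2V true) (P.image setV ∪ Finset.univ.image eltV) with hA
  have hsub : A.card ≤ T.subtreeSize (r2V true) := by
    rw [subtreeSize_def]
    apply card_le_ncard
    intro a ha
    simp only [hA, Finset.mem_insert, Finset.mem_union, Finset.mem_image,
      Finset.mem_univ, true_and] at ha
    rcases ha with rfl | ⟨i, hi, rfl⟩ | ⟨j, rfl⟩
    · exact ⟨0, rfl⟩
    · obtain ⟨j, -, rfl⟩ := Finset.mem_image.mp hi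
      exact ⟨1, by simpa using hsetpar j⟩
    · refine ⟨2, ?_⟩
      show T.parent (T.parent (eltV j)) = r2V true
      rw [hpf j, hsetpar j]
  have hinj_set : Function.Injective (setV (k := k) (n := n)) := fun a b h => by
    simpa using h
  have hinj_elt : Function.Injective (eltV (k := k) (n := n)) := fun a b h => by
    simpa using h
  have hcard : A.card = 1 + P.card + n := by
    rw [hA, Finset.card_insert_of_notMem (by simp),
      Finset.card_union_of_disjoint (by
        rw [Finset.disjoint_left]
        intro a ha hb
        obtain ⟨i, -, rfl⟩ := Finset.mem_image.mp ha
        obtain ⟨j, -, hj⟩ := Finset.mem_image.mp hb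
        simp at hj),
      Finset.card_image_of_injective _ hinj_set,
      Finset.card_image_of_injective _ hinj_elt, Finset.card_univ, Fintype.card_fin]
    omega
  simp only [energy] at hE
  omega
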